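/- The polynomials f = X³ + 6X² + 9X + 1 and g = X³ + 18X² + 81X + 27 in ℤ[X] are both irreducible over ℚ, their factorization patterns agree modulo every prime number p, and yet disc(f) = 3⁴ ≠ 3¹⁰ = disc(g). In particular, the discriminant of a polynomial is not determined by its factorization patterns modulo primes. -/

import Mathlib

open Polynomial UniqueFactorizationMonoid

noncomputable section

/-- The factorization pattern of a polynomial `h` over a field: the multiset of pairs
`(multiplicity, degree)` over the distinct irreducible factors of `h`. -/
def pattern {K : Type*} [Field K] (h : Polynomial K) : Multiset (ℕ × ℕ) := by
  classical
  exact (normalizedFactors h).toFinset.val.map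
    fun g => ((normalizedFactors h).count g, g.natDegree)

/-- The factorization pattern of `f ∈ ℤ[X]` modulo a prime `p`. -/
def patternModZ (p : ℕ) (f : Polynomial ℤ) : Multiset (ℕ × ℕ) :=
  if hp : p.Prime then
    haveI : Fact p.Prime := ⟨hp⟩
    pattern (f.map (Int.castRingHom (ZMod p)))
  else 0

/-- The resultant of `P` (of degree `m`) and `Q` (of degree `n`): the determinant of the
Sylvester matrix. -/
def polyResultant {R : Type*} [CommRing R] (m n : ℕ) (P Q : Polynomial R) : R :=
  (Matrix.of fun i j : Fin (m + n) =>
      if (i : ℕ) < n then (if (i : ℕ) ≤ (j : ℕ) then P.coeff ((j : ℕ) - (i : ℕ)) else 0)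
      else (if (i : ℕ) - n ≤ (j : ℕ) then Q.coeff ((j : ℕ) - ((i : ℕ) - n)) else 0)).det

/-- The discriminant of a monic polynomial `f`, namely `(-1)^(n(n-1)/2) · Res(f, f')`
where `n = deg f`. -/
def polyDisc {R : Type*} [CommRing R] (f : Polynomial R) : R :=
  (-1) ^ (f.natDegree * (f.natDegree - 1) / 2) *
    polyResultant f.natDegree (f.natDegree - 1) f (Polynomial.derivative f)

end

/-!
Substituting `3X` for `X` gives `g(3X) = 27 f(X)`, so for `p ≠ 3` the automorphism `X ↦ 3X` of
`𝔽_p[X]` carries the factorization of `f̄` onto that of `ḡ` up to the unit `27`; modulo `3`,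
`f ≡ (X + 1)³` and `g ≡ X³`. Both polynomials reduce modulo `2` to `X³ + X + 1`, which has no
root in `𝔽₂`, so they are irreducible. For monic polynomials the Sylvester-matrix discriminant is
Mathlib's `Polynomial.discr`, which the classical cubic formula evaluates to `3⁴` and `3¹⁰`.
-/

section Pattern

-- `pattern` is defined with `classical`, so its lemmas must see the same `DecidableEq` instance.
open scoped Classical

theorem pattern_eq_of_normalizedFactors_eq_map {K : Type*} [Field K] {h₁ h₂ : K[X]}
    (φ : K[X] → K[X]) (hinj : Set.InjOn φ {q | q ∈ normalizedFactors h₁})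
    (hdeg : ∀ q ∈ normalizedFactors h₁, (φ q).natDegree = q.natDegree)
    (hmap : normalizedFactors h₂ = (normalizedFactors h₁).map φ) :
    pattern h₂ = pattern h₁ := by
  rw [pattern, pattern, hmap, Multiset.toFinset_map, Finset.image_val_of_injOn fun a ha b hb ↦
    hinj (Multiset.mem_toFinset.1 ha) (Multiset.mem_toFinset.1 hb), Multiset.map_map]
  refine Multiset.map_congr rfl fun q hq ↦ ?_
  have hq : q ∈ normalizedFactors h₁ := Multiset.mem_toFinset.1 hq
  simp only [Function.comp_apply, Multiset.count_map_eq_count φ _ hinj q hq, hdeg q hq]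

theorem normalizedFactors_map_mulEquiv {α : Type*} [CommMonoidWithZero α]
    [NormalizationMonoid α] [UniqueFactorizationMonoid α] (e : α ≃* α) (a : α) :
    normalizedFactors (e a) = (normalizedFactors a).map (normalize ∘ e) := by
  rcases eq_or_ne a 0 with rfl | ha
  · simp
  have hprod : Associated (e (normalizedFactors a).prod) (e a) :=
    (prod_normalizedFactors ha).map e
  rw [← hprod.normalizedFactors_eq, map_multiset_prod, normalizedFactors_prod_eq,
    Multiset.map_map]
  simp only [Multiset.mem_map]
  rintro _ ⟨q, hq, rfl⟩
  exact (MulEquiv.irreducible_iff e).2 (irreducible_of_normalized_factor q hq)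

theorem pattern_map_mulEquiv {K : Type*} [Field K] (e : K[X] ≃* K[X])
    (he : ∀ q, (e q).natDegree = q.natDegree) (h : K[X]) :
    pattern (e h) = pattern h := by
  refine pattern_eq_of_normalizedFactors_eq_map _ (fun a ha b hb hab ↦ ?_)
    (fun q _ ↦ (natDegree_eq_of_degree_eq degree_normalize).trans (he q))
    (normalizedFactors_map_mulEquiv e h)
  have hassoc : Associated a b := by
    simpa using (normalize_eq_normalize_iff_associated.1 hab).map e.symm
  rw [← normalize_normalized_factor a ha, ← normalize_normalized_factor b hb,
    normalize_eq_normalize_iff_associated.2 hassoc]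

theorem pattern_comp_C_mul_X {K : Type*} [Field K] {c : K} (hc : c ≠ 0) (h : K[X]) :
    pattern (h.comp (C c * X)) = pattern h :=
  pattern_map_mulEquiv
    (algEquivOfCompEqX (C c * X) (C c⁻¹ * X) (by simp [← mul_assoc, ← C_mul, hc])
      (by simp [← mul_assoc, ← C_mul, hc])).toMulEquiv
    (fun q ↦ by simp [← comp_eq_aeval, natDegree_comp, natDegree_C_mul_X c hc]) h

theorem pattern_C_mul {K : Type*} [Field K] {u : K} (hu : u ≠ 0) (h : K[X]) :
    pattern (C u * h) = pattern h := by
  rw [pattern, pattern,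
    (associated_unit_mul_left h (C u) (isUnit_C.2 hu.isUnit)).normalizedFactors_eq]

theorem pattern_pow_of_irreducible {K : Type*} [Field K] {q : K[X]} (hq : Irreducible q)
    (hm : q.Monic) {n : ℕ} (hn : n ≠ 0) : pattern (q ^ n) = {(n, q.natDegree)} := by
  rw [pattern, hq.normalizedFactors_pow, hm.normalize_eq_self, Multiset.toFinset_replicate,
    if_neg hn]
  simp

end Pattern

/- The matrix of `polyResultant m n P Q` is the transpose of `sylvester Q P n m`, except that its
rows are not cut off after `m + 1` (resp. `n + 1`) entries; the degree bounds make those extra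
entries vanish. -/
theorem polyResultant_eq_resultant {R : Type*} [CommRing R] {m n : ℕ} {P Q : R[X]}
    (hP : P.natDegree ≤ m) (hQ : Q.natDegree ≤ n) :
    polyResultant m n P Q = resultant Q P n m := by
  rw [resultant, ← Matrix.det_transpose, ← Matrix.det_reindex_self (finCongr (add_comm n m)),
    polyResultant]
  congr 1
  ext i j
  simp only [Matrix.of_apply, Matrix.reindex_apply, Matrix.submatrix_apply, Matrix.transpose_apply,
    finCongr_symm, finCongr_apply, sylvester, Fin.addCases, Fin.val_castLT, Fin.val_subNat,
    Fin.val_cast, Fin.val_fin_le, Fin.cast_le_cast, Set.mem_Icc, tsub_le_iff_right,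
    eq_rec_constant, dite_eq_ite]
  split_ifs <;> first
    | rfl
    | omega
    | exact coeff_eq_zero_of_natDegree_lt (by omega)

theorem polyDisc_eq_leadingCoeff_mul_discr {R : Type*} [CommRing R] {f : R[X]}
    (hf : 0 < f.degree) : polyDisc f = f.leadingCoeff * f.discr := by
  rw [polyDisc, polyResultant_eq_resultant le_rfl (natDegree_derivative_le f), resultant_comm,
    resultant_deriv hf, mul_comm (f.natDegree - 1), (Nat.even_mul_pred_self _).neg_one_pow]
  have hsign : ((-1 : R) ^ (f.natDegree * (f.natDegree - 1) / 2)) ^ 2 = 1 := by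
    rw [← pow_mul, pow_mul', neg_one_sq, one_pow]
  linear_combination f.leadingCoeff * f.discr * hsign

section MonicCubic

variable {R : Type*} [CommRing R]

noncomputable def monicCubic (a b c : R) : R[X] := X ^ 3 + C a * X ^ 2 + C b * X + C c

theorem map_monicCubic {S : Type*} [CommRing S] (φ : R →+* S) (a b c : R) :
    (monicCubic a b c).map φ = monicCubic (φ a) (φ b) (φ c) := by
  simp [monicCubic]

theorem monic_monicCubic (a b c : R) : (monicCubic a b c).Monic := by
  unfold monicCubic; monicity!

theorem degree_monicCubic [Nontrivial R] (a b c : R) : (monicCubic a b c).degree = 3 := by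
  unfold monicCubic; compute_degree!

theorem monicCubic_comp_C_mul_X (t a b c : R) :
    (monicCubic (t * a) (t ^ 2 * b) (t ^ 3 * c)).comp (C t * X) =
      C (t ^ 3) * monicCubic a b c := by
  simp only [monicCubic, add_comp, mul_comp, pow_comp, C_comp, X_comp, map_mul, map_pow]
  ring

theorem polyDisc_monicCubic [Nontrivial R] (a b c : R) :
    polyDisc (monicCubic a b c) =
      a ^ 2 * b ^ 2 - 4 * b ^ 3 - 4 * a ^ 3 * c - 27 * c ^ 2 + 18 * a * b * c := by
  have hdeg := degree_monicCubic a b c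
  rw [polyDisc_eq_leadingCoeff_mul_discr (by rw [hdeg]; norm_num),
    (monic_monicCubic a b c).leadingCoeff, one_mul, discr_of_degree_eq_three hdeg]
  simp [monicCubic, coeff_X, coeff_C, coeff_X_pow]

theorem irreducible_monicCubic_of_forall_ne_zero {K : Type*} [Field K] {a b c : K}
    (h : ∀ x, x ^ 3 + a * x ^ 2 + b * x + c ≠ 0) : Irreducible (monicCubic a b c) := by
  have hdeg := natDegree_eq_of_degree_eq_some (degree_monicCubic a b c)
  rw [irreducible_iff_roots_eq_zero_of_degree_le_three (by rw [hdeg]; norm_num) hdeg.le,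
    Multiset.eq_zero_iff_forall_notMem]
  exact fun x hx ↦ h x (by simpa [monicCubic] using isRoot_of_mem_roots hx)

theorem pattern_monicCubic_scale {K : Type*} [Field K] {t : K} (ht : t ≠ 0) (a b c : K) :
    pattern (monicCubic (t * a) (t ^ 2 * b) (t ^ 3 * c)) = pattern (monicCubic a b c) := by
  rw [← pattern_comp_C_mul_X ht, monicCubic_comp_C_mul_X, pattern_C_mul (pow_ne_zero 3 ht)]

end MonicCubic

theorem irreducible_map_rat_of_irreducible_map_zmod {f : ℤ[X]} (hf : f.Monic) (p : ℕ)
    [Fact p.Prime] (hp : Irreducible (f.map (Int.castRingHom (ZMod p)))) :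
    Irreducible (f.map (Int.castRingHom ℚ)) :=
  (IsPrimitive.Int.irreducible_iff_irreducible_map_cast hf.isPrimitive).1
    (hf.irreducible_of_irreducible_map _ _ hp)

theorem irreducible_map_rat_monicCubic_of_even_of_odd {a b c : ℤ} (ha : Even a) (hb : Odd b)
    (hc : Odd c) : Irreducible ((monicCubic a b c).map (Int.castRingHom ℚ)) := by
  refine irreducible_map_rat_of_irreducible_map_zmod (monic_monicCubic a b c) 2 ?_
  rw [map_monicCubic, eq_intCast, eq_intCast, eq_intCast, ZMod.intCast_eq_zero_iff_even.2 ha,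
    ZMod.intCast_eq_one_iff_odd.2 hb, ZMod.intCast_eq_one_iff_odd.2 hc]
  exact irreducible_monicCubic_of_forall_ne_zero (by decide)

theorem monicCubic_zmod_three :
    monicCubic (6 : ZMod 3) 9 1 = (X + C 1) ^ 3 ∧ monicCubic (18 : ZMod 3) 81 27 = X ^ 3 := by
  have h3 : (3 : (ZMod 3)[X]) = 0 := CharP.cast_eq_zero _ 3
  simp only [monicCubic, map_ofNat, map_one]
  constructor
  · linear_combination (X ^ 2 + 2 * X) * h3
  · linear_combination (6 * X ^ 2 + 27 * X + 9) * h3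

theorem patternModZ_monicCubic_eq (p : ℕ) (hp : p.Prime) :
    patternModZ p (monicCubic 6 9 1) = patternModZ p (monicCubic 18 81 27) := by
  have := Fact.mk hp
  simp only [patternModZ, dif_pos hp, map_monicCubic, map_ofNat, map_one]
  rcases eq_or_ne p 3 with rfl | hp3
  · have hlin : Irreducible (X + C (1 : ZMod 3)) :=
      irreducible_of_degree_eq_one (degree_X_add_C 1)
    rw [monicCubic_zmod_three.1, monicCubic_zmod_three.2,
      pattern_pow_of_irreducible hlin (monic_X_add_C 1) three_ne_zero,
      pattern_pow_of_irreducible irreducible_X monic_X three_ne_zero, natDegree_X_add_C,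
      natDegree_X]
  · have h3 : (3 : ZMod p) ≠ 0 := fun h ↦ hp3 <|
      (Nat.prime_dvd_prime_iff_eq hp Nat.prime_three).1 <|
        (ZMod.natCast_eq_zero_iff _ _).1 (by exact_mod_cast h)
    have hscale := pattern_monicCubic_scale h3 (6 : ZMod p) 9 1
    norm_num at hscale
    exact hscale.symm

/-- **Example 4.9.** The polynomials `f = X³ + 6X² + 9X + 1` and
`g = X³ + 18X² + 81X + 27` are both irreducible over `ℚ`, their factorization patterns
agree modulo every prime `p`, and yet `disc(f) = 3⁴ ≠ 3¹⁰ = disc(g)`. -/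
theorem example_same_patterns_different_discriminant :
    Irreducible ((Polynomial.X ^ 3 + Polynomial.C 6 * Polynomial.X ^ 2 +
        Polynomial.C 9 * Polynomial.X + Polynomial.C 1 : Polynomial ℤ).map
        (Int.castRingHom ℚ)) ∧
    Irreducible ((Polynomial.X ^ 3 + Polynomial.C 18 * Polynomial.X ^ 2 +
        Polynomial.C 81 * Polynomial.X + Polynomial.C 27 : Polynomial ℤ).map
        (Int.castRingHom ℚ)) ∧
    (∀ p : ℕ, p.Prime →
      patternModZ p (Polynomial.X ^ 3 + Polynomial.C 6 * Polynomial.X ^ 2 +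
          Polynomial.C 9 * Polynomial.X + Polynomial.C 1) =
        patternModZ p (Polynomial.X ^ 3 + Polynomial.C 18 * Polynomial.X ^ 2 +
          Polynomial.C 81 * Polynomial.X + Polynomial.C 27)) ∧
    polyDisc (Polynomial.X ^ 3 + Polynomial.C 6 * Polynomial.X ^ 2 +
        Polynomial.C 9 * Polynomial.X + Polynomial.C 1 : Polynomial ℤ) = 3 ^ 4 ∧
    polyDisc (Polynomial.X ^ 3 + Polynomial.C 18 * Polynomial.X ^ 2 +
        Polynomial.C 81 * Polynomial.X + Polynomial.C 27 : Polynomial ℤ) = 3 ^ 10 ∧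
    (3 ^ 4 : ℤ) ≠ 3 ^ 10 :=
  ⟨irreducible_map_rat_monicCubic_of_even_of_odd (by decide) (by decide) (by decide),
    irreducible_map_rat_monicCubic_of_even_of_odd (by decide) (by decide) (by decide),
    patternModZ_monicCubic_eq,
    (polyDisc_monicCubic (6 : ℤ) 9 1).trans (by norm_num),
    (polyDisc_monicCubic (18 : ℤ) 81 27).trans (by norm_num),
    by norm_num⟩
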